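/- Let ε > 0, let c : ℝ^d × ℝ^d → [0,∞) be twice continuously differentiable with ‖∇²c‖_op ≤ R everywhere for some R > 0, let μ be a probability measure on ℝ^d with finite second moment, and let ν be a probability measure on ℝ^d with ∫ e^{δ|y|²} ν(dy) < ∞ for some δ > 0. Let φ ∈ L¹(μ) with ∫ φ dμ = 0 and define ψ(y) := −ε log ∫ exp((φ(x) − c(x,y))/ε) μ(dx). Then for every bounded set B ⊂ ℝ^d and every p > 0, the integral ∫_{ℝ^d} sup_{x ∈ B} exp( p(ψ(y) − c(x,y))/ε ) ν(dy) is finite. -/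

import Mathlib

/-!
For every set `S` of positive `μ`-measure, `ψ(y) ≤ sup_S (c(·, y) - φ) - ε log μ(S)`. Taking for `S`
a set on which `φ` is bounded below and `x` is bounded, the bound on the Hessian of `c` makes
`c(x, y) - c(x', y)` grow at most affinely in `‖y‖` for `x, x'` in a ball, so
`ψ(y) - c(x', y) ≤ C₀ + C₁ ‖y‖` uniformly in `x' ∈ B`. An exponential of an affine function of
`‖y‖` is dominated by a multiple of `exp(δ ‖y‖²)`, which is `ν`-integrable.
-/

open MeasureTheory

noncomputable section

variable {d : ℕ}

local notation "E" => EuclideanSpace ℝ (Fin d)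

open Real NNReal

section HessianBound

variable {F G : Type*} [NormedAddCommGroup F] [NormedSpace ℝ F] [NormedAddCommGroup G]
  [NormedSpace ℝ G] {f : F → G} {R : ℝ≥0}

theorem lipschitzWith_fderiv_of_norm_iteratedFDeriv_two_le (hf : ContDiff ℝ 2 f)
    (hR : ∀ z, ‖iteratedFDeriv ℝ 2 f z‖ ≤ R) : LipschitzWith R (fderiv ℝ f) := by
  refine lipschitzWith_of_nnnorm_fderiv_le
    ((hf.fderiv_right (m := 1) le_rfl).differentiable one_ne_zero) fun z => ?_
  rw [← NNReal.coe_le_coe, coe_nnnorm, ← norm_iteratedFDeriv_one, norm_iteratedFDeriv_fderiv]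
  exact hR z

theorem norm_fderiv_le_of_norm_iteratedFDeriv_two_le (hf : ContDiff ℝ 2 f)
    (hR : ∀ z, ‖iteratedFDeriv ℝ 2 f z‖ ≤ R) (z : F) :
    ‖fderiv ℝ f z‖ ≤ ‖fderiv ℝ f 0‖ + R * ‖z‖ := by
  have hlip := (lipschitzWith_fderiv_of_norm_iteratedFDeriv_two_le hf hR).dist_le_mul z 0
  rw [dist_eq_norm, dist_eq_norm, sub_zero] at hlip
  linarith [norm_le_insert' (fderiv ℝ f z) (fderiv ℝ f 0)]

theorem norm_sub_le_of_norm_iteratedFDeriv_two_le (hf : ContDiff ℝ 2 f)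
    (hR : ∀ z, ‖iteratedFDeriv ℝ 2 f z‖ ≤ R) {ρ : ℝ} {z z' : F} (hz : ‖z‖ ≤ ρ)
    (hz' : ‖z'‖ ≤ ρ) : ‖f z - f z'‖ ≤ (‖fderiv ℝ f 0‖ + R * ρ) * ‖z - z'‖ := by
  refine (convex_closedBall (0 : F) ρ).norm_image_sub_le_of_norm_fderiv_le
    (fun w _ => hf.differentiable two_ne_zero w) (fun w hw => ?_) (by simpa using hz')
    (by simpa using hz)
  grw [norm_fderiv_le_of_norm_iteratedFDeriv_two_le hf hR w, mem_closedBall_zero_iff.1 hw]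

theorem exists_sub_le_affine_of_norm_iteratedFDeriv_two_le {X Y : Type*} [NormedAddCommGroup X]
    [NormedSpace ℝ X] [NormedAddCommGroup Y] [NormedSpace ℝ Y] {c : X × Y → ℝ}
    (hc : ContDiff ℝ 2 c) (hR : ∀ z, ‖iteratedFDeriv ℝ 2 c z‖ ≤ R) (K : ℝ≥0) :
    ∃ A B : ℝ≥0, ∀ x x' y, ‖x‖ ≤ K → ‖x'‖ ≤ K → c (x, y) - c (x', y) ≤ A + B * ‖y‖ := by
  refine ⟨2 * K * (‖fderiv ℝ c 0‖₊ + R * K), 2 * K * R, fun x x' y hx hx' => ?_⟩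
  have hball : ∀ u : X, ‖u‖ ≤ K → ‖(u, y)‖ ≤ K + ‖y‖ := fun u hu =>
    norm_prod_le_iff.2 ⟨by linarith [norm_nonneg y], by linarith [K.coe_nonneg]⟩
  have hdist : ‖(x, y) - (x', y)‖ ≤ 2 * K := by
    rw [Prod.mk_sub_mk, sub_self, norm_prod_le_iff, norm_zero]
    exact ⟨by linarith [norm_sub_le x x'], by positivity⟩
  calc c (x, y) - c (x', y) ≤ ‖c (x, y) - c (x', y)‖ := le_norm_self _
    _ ≤ (‖fderiv ℝ c 0‖ + R * (K + ‖y‖)) * ‖(x, y) - (x', y)‖ :=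
      norm_sub_le_of_norm_iteratedFDeriv_two_le hc hR (hball x hx) (hball x' hx')
    _ ≤ (‖fderiv ℝ c 0‖ + R * (K + ‖y‖)) * (2 * K) := by gcongr
    _ = _ := by push_cast; ring

end HessianBound

theorem exp_add_mul_le_mul_exp_sq (a b t : ℝ) {δ : ℝ} (hδ : 0 < δ) :
    exp (a + b * t) ≤ exp (a + b ^ 2 / (4 * δ)) * exp (δ * t ^ 2) := by
  rw [← exp_add, exp_le_exp, add_assoc, add_le_add_iff_left, div_add' _ _ _ (by positivity),
    le_div_iff₀ (by positivity)]
  nlinarith [sq_nonneg (b - 2 * δ * t)]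

theorem integrable_of_norm_le_exp_add_mul {Y : Type*} [NormedAddCommGroup Y] [MeasurableSpace Y]
    {ν : Measure Y} {δ : ℝ} (hδ : 0 < δ) (hν : Integrable (fun y => exp (δ * ‖y‖ ^ 2)) ν)
    {f : Y → ℝ} (hf : AEStronglyMeasurable f ν) {a b : ℝ}
    (hbound : ∀ y, ‖f y‖ ≤ exp (a + b * ‖y‖)) : Integrable f ν :=
  (hν.const_mul _).mono' hf
    (ae_of_all _ fun y => (hbound y).trans (exp_add_mul_le_mul_exp_sq a b ‖y‖ hδ))

theorem lowerSemicontinuous_biSup_of_le {ι α : Type*} [TopologicalSpace α] {f : ι → α → ℝ}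
    {M : ℝ} (hf : ∀ i, Continuous (f i)) (hM : ∀ i y, f i y ≤ M) (s : Set ι) :
    LowerSemicontinuous fun y => ⨆ i ∈ s, f i y := by
  have hbdd : ∀ i y, BddAbove (Set.range fun _ : i ∈ s => f i y) := fun i y =>
    ⟨M, by rintro _ ⟨_, rfl⟩; exact hM i y⟩
  refine lowerSemicontinuous_ciSup (fun y => ⟨max M 0, ?_⟩) fun i =>
    lowerSemicontinuous_ciSup (hbdd i) fun _ => (hf i).lowerSemicontinuous
  rintro _ ⟨i, rfl⟩
  exact Real.iSup_le (fun _ => (hM i y).trans (le_max_left _ _)) (le_max_right _ _)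

theorem measurable_biSup_exp_mul_sub {X Y : Type*} [TopologicalSpace Y] [MeasurableSpace Y]
    [OpensMeasurableSpace Y] {g : Y → ℝ} (hg : Measurable g) {h : X → Y → ℝ}
    (hh : ∀ x, Continuous (h x)) (h0 : ∀ x y, 0 ≤ h x y) {t : ℝ} (ht : 0 ≤ t) (B : Set X) :
    Measurable fun y => ⨆ x ∈ B, exp (t * (g y - h x y)) := by
  have hsplit : ∀ y, ⨆ x ∈ B, exp (t * (g y - h x y)) =
      exp (t * g y) * ⨆ x ∈ B, exp (-(t * h x y)) := fun y => by
    simp only [Real.mul_iSup_of_nonneg (exp_pos _).le, ← exp_add, ← sub_eq_add_neg, mul_sub]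
  simp only [hsplit]
  refine (hg.const_mul t).exp.mul (lowerSemicontinuous_biSup_of_le (M := 1)
    (fun x => ((hh x).const_mul t).neg.rexp) (fun x y => ?_) B).measurable
  exact exp_le_one_iff.2 (neg_nonpos.2 (mul_nonneg ht (h0 x y)))

def entropicCTransform {X Y : Type*} [MeasurableSpace X] (ε : ℝ) (c : X × Y → ℝ) (μ : Measure X)
    (φ : X → ℝ) (y : Y) : ℝ :=
  -ε * log (∫ x, exp ((φ x - c (x, y)) / ε) ∂μ)

section EntropicCTransform

variable {X Y : Type*} [MeasurableSpace X] {ε : ℝ} {c : X × Y → ℝ} {μ : Measure X} {φ : X → ℝ}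

theorem entropicCTransform_congr_ae {φ' : X → ℝ} (h : φ =ᵐ[μ] φ') :
    entropicCTransform ε c μ φ = entropicCTransform ε c μ φ' := by
  funext y
  rw [entropicCTransform, entropicCTransform, integral_congr_ae (h.mono fun x hx => by rw [hx])]

theorem measurable_entropicCTransform [MeasurableSpace Y] [SFinite μ] (hφ : Measurable φ)
    (hc : Measurable c) : Measurable (entropicCTransform ε c μ φ) :=
  measurable_const.mul (StronglyMeasurable.integral_prod_left'
    (((hφ.comp measurable_fst).sub hc).div_const ε).exp.stronglyMeasurable).measurable.log

theorem log_measureReal_add_le_log_integral_exp [IsFiniteMeasure μ] {S : Set X}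
    (hS : MeasurableSet S) (hμS : μ S ≠ 0) {f : X → ℝ} (hf : Integrable (fun x => exp (f x)) μ)
    {a : ℝ} (ha : ∀ x ∈ S, a ≤ f x) : log (μ.real S) + a ≤ log (∫ x, exp (f x) ∂μ) := by
  have hS_pos : 0 < μ.real S := ENNReal.toReal_pos hμS (measure_ne_top μ S)
  have hle : exp a * μ.real S ≤ ∫ x, exp (f x) ∂μ :=
    (setIntegral_ge_of_const_le_real hS (measure_ne_top μ S) (fun x hx => exp_le_exp.2 (ha x hx))
      hf.integrableOn).trans (setIntegral_le_integral hf (ae_of_all _ fun x => (exp_pos _).le))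
  calc log (μ.real S) + a = log (exp a * μ.real S) := by
        rw [log_mul (exp_pos a).ne' hS_pos.ne', log_exp, add_comm]
    _ ≤ _ := log_le_log (by positivity) hle

theorem entropicCTransform_le [IsFiniteMeasure μ] (hε : 0 < ε) {S : Set X} (hS : MeasurableSet S)
    (hμS : μ S ≠ 0) {y : Y} (hint : Integrable (fun x => exp ((φ x - c (x, y)) / ε)) μ) {b : ℝ}
    (hb : ∀ x ∈ S, c (x, y) - φ x ≤ b) :
    entropicCTransform ε c μ φ y ≤ b - ε * log (μ.real S) := by
  have hlog := log_measureReal_add_le_log_integral_exp hS hμS hint (a := -b / ε) fun x hx => by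
    rw [div_le_div_iff_of_pos_right hε]
    linarith [hb x hx]
  have := mul_le_mul_of_nonneg_left hlog hε.le
  rw [mul_add, mul_div_cancel₀ _ hε.ne'] at this
  rw [entropicCTransform]
  linarith

theorem exists_entropicCTransform_sub_le_affine [NormedAddCommGroup X] [OpensMeasurableSpace X]
    [NormedAddCommGroup Y] [IsFiniteMeasure μ] [NeZero μ] (hε : 0 < ε) (hφ : Measurable φ)
    (hc0 : ∀ z, 0 ≤ c z) (hinc : ∀ K : ℝ≥0, ∃ A B : ℝ≥0, ∀ x x' y, ‖x‖ ≤ K → ‖x'‖ ≤ K →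
      c (x, y) - c (x', y) ≤ A + B * ‖y‖) (K : ℝ≥0) :
    ∃ C₀ C₁ : ℝ, ∀ y x', ‖x'‖ ≤ K → entropicCTransform ε c μ φ y - c (x', y) ≤ C₀ + C₁ * ‖y‖ := by
  set S : ℕ → Set X := fun n => {x | ‖x‖ ≤ n ∧ -(n : ℝ) ≤ φ x}
  have hS : ∀ n, MeasurableSet (S n) := fun n =>
    (measurableSet_le measurable_norm measurable_const).inter
      (measurableSet_le measurable_const hφ)
  have hcover : ⋃ n, S n = Set.univ := Set.eq_univ_of_forall fun x => by
    obtain ⟨n, hn⟩ := exists_nat_ge (max ‖x‖ (-φ x))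
    exact Set.mem_iUnion.2 ⟨n, (le_max_left _ _).trans hn, by linarith [le_max_right ‖x‖ (-φ x)]⟩
  obtain ⟨n, hn⟩ := exists_measure_pos_of_not_measure_iUnion_null (μ := μ) (s := S)
    (by simp [hcover, NeZero.ne μ])
  obtain ⟨A, B, hAB⟩ := hinc (max K n)
  refine ⟨A + n + ε * |log (μ.real (S n))|, B, fun y x' hx' => ?_⟩
  have hlog : -(ε * log (μ.real (S n))) ≤ ε * |log (μ.real (S n))| := by
    rw [← mul_neg]; exact mul_le_mul_of_nonneg_left (neg_le_abs _) hε.le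
  by_cases hint : Integrable (fun x => exp ((φ x - c (x, y)) / ε)) μ
  · refine (sub_le_sub_right (entropicCTransform_le hε (hS n) hn.ne' hint
      (b := c (x', y) + A + B * ‖y‖ + n) fun x ⟨hx, hφx⟩ => ?_) _).trans (by linarith)
    have := hAB x x' y (hx.trans (by simp)) (hx'.trans (by simp))
    linarith
  · -- the integral is junk `0` here, so the transform is `0`
    rw [entropicCTransform, integral_undef hint, log_zero, mul_zero]
    have : 0 ≤ (A : ℝ) + n + ε * |log (μ.real (S n))| + B * ‖y‖ := by positivity
    linarith [hc0 (x', y)]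

end EntropicCTransform

theorem integrability_sup_exp_potential_general
    (ε : ℝ) (hε : 0 < ε)
    (c : E × E → ℝ) (hc0 : ∀ z, 0 ≤ c z) (hc : ContDiff ℝ 2 c)
    (R : ℝ) (hHess : ∀ z : E × E, ‖iteratedFDeriv ℝ 2 c z‖ ≤ R)
    (μ : Measure E) [IsProbabilityMeasure μ]
    (ν : Measure E)
    (δ : ℝ) (hδ : 0 < δ) (hν : Integrable (fun y => Real.exp (δ * ‖y‖ ^ 2)) ν)
    (φ : E → ℝ) (hφ : Integrable φ μ)
    (ψ : E → ℝ)
    (hψ : ∀ y, ψ y = -ε * Real.log (∫ x, Real.exp ((φ x - c (x, y)) / ε) ∂μ)) :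
    ∀ B : Set E, Bornology.IsBounded B → ∀ p : ℝ, 0 < p →
      Integrable (fun y => ⨆ x ∈ B, Real.exp (p * (ψ y - c (x, y)) / ε)) ν := by
  intro B hB p hp
  obtain ⟨K, hBK⟩ := hB.exists_norm_le
  have hφm : Measurable (hφ.1.mk φ) := hφ.1.stronglyMeasurable_mk.measurable
  have hψ_eq : ψ = entropicCTransform ε c μ (hφ.1.mk φ) :=
    (funext hψ).trans (entropicCTransform_congr_ae hφ.1.ae_eq_mk)
  obtain ⟨C₀, C₁, hψc⟩ := exists_entropicCTransform_sub_le_affine (μ := μ) hε hφm hc0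
    (exists_sub_le_affine_of_norm_iteratedFDeriv_two_le hc
      fun z => (hHess z).trans R.le_coe_toNNReal) K.toNNReal
  have hψm : Measurable ψ := hψ_eq ▸ measurable_entropicCTransform hφm hc.continuous.measurable
  refine integrable_of_norm_le_exp_add_mul hδ hν (a := p * C₀ / ε) (b := p * C₁ / ε) ?_
    fun y => ?_
  · simp_rw [mul_div_right_comm p]
    exact (measurable_biSup_exp_mul_sub hψm (fun x => hc.continuous.comp (.prodMk_right x))
      (fun x y => hc0 (x, y)) (div_pos hp hε).le B).aestronglyMeasurable
  · rw [norm_of_nonneg (Real.iSup_nonneg fun x => Real.iSup_nonneg fun _ => (exp_pos _).le)]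
    refine Real.iSup_le (fun x => Real.iSup_le (fun hx => ?_) (exp_pos _).le) (exp_pos _).le
    rw [exp_le_exp]
    calc p * (ψ y - c (x, y)) / ε ≤ p * (C₀ + C₁ * ‖y‖) / ε := by
          gcongr
          rw [hψ_eq]
          exact hψc y x ((hBK x hx).trans K.le_coe_toNNReal)
      _ = p * C₀ / ε + p * C₁ / ε * ‖y‖ := by ring

/-- Integrability lemma for the Schrödinger potential `ψ`: for every bounded set `B`
and every `p > 0`, the function `y ↦ sup_{x ∈ B} exp(p (ψ(y) − c(x,y))/ε)` is
`ν`-integrable. -/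
theorem integrability_sup_exp_potential
    (ε : ℝ) (hε : 0 < ε)
    (c : E × E → ℝ) (hc0 : ∀ z, 0 ≤ c z) (hc : ContDiff ℝ 2 c)
    (R : ℝ) (hR : 0 < R) (hHess : ∀ z : E × E, ‖iteratedFDeriv ℝ 2 c z‖ ≤ R)
    (μ : Measure E) [IsProbabilityMeasure μ] (h2μ : Integrable (fun x => ‖x‖ ^ 2) μ)
    (ν : Measure E) [IsProbabilityMeasure ν]
    (δ : ℝ) (hδ : 0 < δ) (hν : Integrable (fun y => Real.exp (δ * ‖y‖ ^ 2)) ν)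
    (φ : E → ℝ) (hφ : Integrable φ μ) (hφ0 : ∫ x, φ x ∂μ = 0)
    (ψ : E → ℝ)
    (hψ : ∀ y, ψ y = -ε * Real.log (∫ x, Real.exp ((φ x - c (x, y)) / ε) ∂μ)) :
    ∀ B : Set E, Bornology.IsBounded B → ∀ p : ℝ, 0 < p →
      Integrable (fun y => ⨆ x ∈ B, Real.exp (p * (ψ y - c (x, y)) / ε)) ν :=
  integrability_sup_exp_potential_general ε hε c hc0 hc R hHess μ ν δ hδ hν φ hφ ψ hψ
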